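/- arXiv:2209.14963 — 3 statements merged into one kernel-verified Lean document; each statement's English description precedes it below -/
import Mathlib

section
/- Let π₁ = (d_t)_{t≥0} and π₂ = (f_t)_{t≥0} be Markovian randomized policies, R ∈ ℝ^{m×n} with every entry of absolute value at most C, and t ≥ 0. Then ‖P_t^{π₁} R_{d_t} − P_t^{π₂} R_{f_t}‖_∞ ≤ C Σ_{i=0}^{t} ‖d_i − f_i‖_∞, where R_d ∈ ℝ^m has entries (R_d)_s = Σ_a R(s,a) d(a|s), P_0^π := I, P_t^π := P_{d_0} ⋯ P_{d_{t−1}} with (P_d)_{s,s'} = Σ_a p(s'|s,a) d(a|s), ‖·‖_∞ on vectors is the maximum absolute entry, and on matrices the maximum absolute row-sum norm. -/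
open Finset Filter Matrix

/-- A row-stochastic matrix (decision rule): nonnegative entries, each row sums to 1. -/
def IsStoch (m n : ℕ) (d : Matrix (Fin m) (Fin n) ℝ) : Prop :=
  (∀ s a, 0 ≤ d s a) ∧ ∀ s, ∑ a, d s a = 1

/-- Valid transition probabilities `p s a s' = p(s'|s,a)`. -/
def IsTransKer (m n : ℕ) (p : Fin m → Fin n → Fin m → ℝ) : Prop :=
  (∀ s a s', 0 ≤ p s a s') ∧ ∀ s a, ∑ s', p s a s' = 1

/-- Max absolute entry norm on vectors. -/
noncomputable def vecNorm {m : ℕ} (v : Fin m → ℝ) : ℝ := ⨆ i, |v i|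

/-- Maximum absolute row-sum norm on matrices. -/
noncomputable def rowSumNorm {m n : ℕ} (B : Matrix (Fin m) (Fin n) ℝ) : ℝ :=
  ⨆ i, ∑ j, |B i j|

/-- Max absolute entry norm on matrices. -/
noncomputable def maxNorm {m n : ℕ} (B : Matrix (Fin m) (Fin n) ℝ) : ℝ :=
  ⨆ i, ⨆ j, |B i j|

/-- `(R_d)_s = ∑_a R(s,a) d(a|s)`. -/
noncomputable def Rvec {m n : ℕ} (R d : Matrix (Fin m) (Fin n) ℝ) : Fin m → ℝ :=
  fun s => ∑ a, R s a * d s a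

/-- `(P_d)_{s,s'} = ∑_a p(s'|s,a) d(a|s)`. -/
noncomputable def Pmat {m n : ℕ} (p : Fin m → Fin n → Fin m → ℝ)
    (d : Matrix (Fin m) (Fin n) ℝ) : Matrix (Fin m) (Fin m) ℝ :=
  fun s s' => ∑ a, p s a s' * d s a

/-- `P_0^π = I`, `P_{t+1}^π = P_t^π ⬝ P_{d_t}`. -/
noncomputable def Ppi {m n : ℕ} (p : Fin m → Fin n → Fin m → ℝ)
    (π : ℕ → Matrix (Fin m) (Fin n) ℝ) : ℕ → Matrix (Fin m) (Fin m) ℝ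
  | 0 => 1
  | t + 1 => Ppi p π t * Pmat p (π t)

/-- Finite-horizon standard discounted cost vector `V_T(π,R)`. -/
noncomputable def VT {m n : ℕ} (β : ℝ) (p : Fin m → Fin n → Fin m → ℝ)
    (π : ℕ → Matrix (Fin m) (Fin n) ℝ) (R : Matrix (Fin m) (Fin n) ℝ) (T : ℕ) :
    Fin m → ℝ :=
  fun x => ∑ t ∈ Finset.range T, β ^ t * (Ppi p π t *ᵥ Rvec R (π t)) x

/-- Infinite-horizon standard discounted cost vector `V(π,R)`. -/
noncomputable def Vinf {m n : ℕ} (β : ℝ) (p : Fin m → Fin n → Fin m → ℝ)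
    (π : ℕ → Matrix (Fin m) (Fin n) ℝ) (R : Matrix (Fin m) (Fin n) ℝ) :
    Fin m → ℝ :=
  fun x => ∑' t : ℕ, β ^ t * (Ppi p π t *ᵥ Rvec R (π t)) x

/-- `Qrev β γ p π R T k = Q_{T-1-k}^{T,π,R}`, defined by the backward recursion. -/
noncomputable def Qrev {m n : ℕ} (β γ : ℝ) (p : Fin m → Fin n → Fin m → ℝ)
    (π : ℕ → Matrix (Fin m) (Fin n) ℝ) (R : Matrix (Fin m) (Fin n) ℝ) (T : ℕ) :
    ℕ → Matrix (Fin m) (Fin n) ℝ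
  | 0 => fun s a => Real.exp (γ * β ^ (T - 1) * R s a)
  | k + 1 => fun s a =>
      Real.exp (γ * β ^ (T - 1 - (k + 1)) * R s a) *
        ∑ s', p s a s' * ∑ a', π (T - 1 - k) s' a' * Qrev β γ p π R T k s' a'

/-- `Q_t^{T,π,R}` for `0 ≤ t ≤ T-1`. -/
noncomputable def Qmat {m n : ℕ} (β γ : ℝ) (p : Fin m → Fin n → Fin m → ℝ)
    (π : ℕ → Matrix (Fin m) (Fin n) ℝ) (R : Matrix (Fin m) (Fin n) ℝ) (T t : ℕ) :
    Matrix (Fin m) (Fin n) ℝ :=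
  Qrev β γ p π R T (T - 1 - t)

/-- Finite-horizon risk-sensitive cost vector `J_T(π,γ,R)`. -/
noncomputable def JT {m n : ℕ} (β γ : ℝ) (p : Fin m → Fin n → Fin m → ℝ)
    (π : ℕ → Matrix (Fin m) (Fin n) ℝ) (R : Matrix (Fin m) (Fin n) ℝ) (T : ℕ) :
    Fin m → ℝ :=
  fun s => ∑ a, π 0 s a * Qmat β γ p π R T 0 s a

/-- Infinite-horizon risk-sensitive cost `J(π,γ,R)(x) = lim_{T→∞} J_T(π,γ,R)(x)`. -/
noncomputable def Jinf {m n : ℕ} (β γ : ℝ) (p : Fin m → Fin n → Fin m → ℝ)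
    (π : ℕ → Matrix (Fin m) (Fin n) ℝ) (R : Matrix (Fin m) (Fin n) ℝ) (x : Fin m) : ℝ :=
  limUnder atTop (fun T => JT β γ p π R T x)

/-- The metric `μ(π₁,π₂) = sup_t δ^t ‖d_t − f_t‖_∞` on Markovian randomized policies. -/
noncomputable def policyDist {m n : ℕ} (δ : ℝ)
    (π₁ π₂ : ℕ → Matrix (Fin m) (Fin n) ℝ) : ℝ :=
  ⨆ t : ℕ, δ ^ t * rowSumNorm (π₁ t - π₂ t)

section aux

variable {m n : ℕ}

lemma bdd_range' {α : Type*} [Finite α] (f : α → ℝ) : BddAbove (Set.range f) :=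
  Set.Finite.bddAbove (Set.finite_range f)

lemma vecNorm_le' [Nonempty (Fin m)] {v : Fin m → ℝ} {a : ℝ} (h : ∀ i, |v i| ≤ a) :
    vecNorm v ≤ a := ciSup_le h

lemma abs_le_vecNorm' {v : Fin m → ℝ} (i : Fin m) : |v i| ≤ vecNorm v := by
  unfold vecNorm; exact le_ciSup (bdd_range' (fun j => |v j|)) i

lemma vecNorm_nonneg' [Nonempty (Fin m)] (v : Fin m → ℝ) : 0 ≤ vecNorm v :=
  le_trans (abs_nonneg _) (abs_le_vecNorm' (Classical.arbitrary _))

lemma rowSumNorm_le' [Nonempty (Fin m)] {B : Matrix (Fin m) (Fin n) ℝ} {a : ℝ}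
    (h : ∀ i, ∑ j, |B i j| ≤ a) : rowSumNorm B ≤ a := ciSup_le h

lemma rowsum_le_rowSumNorm' {B : Matrix (Fin m) (Fin n) ℝ} (i : Fin m) :
    ∑ j, |B i j| ≤ rowSumNorm B := by
  unfold rowSumNorm; exact le_ciSup (bdd_range' (fun i => ∑ j, |B i j|)) i

lemma rowSumNorm_nonneg' [Nonempty (Fin m)] (B : Matrix (Fin m) (Fin n) ℝ) :
    0 ≤ rowSumNorm B :=
  le_trans (Finset.sum_nonneg fun _ _ => abs_nonneg _)
    (rowsum_le_rowSumNorm' (Classical.arbitrary _))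

lemma vecNorm_add_le' [Nonempty (Fin m)] (u v : Fin m → ℝ) :
    vecNorm (u + v) ≤ vecNorm u + vecNorm v := by
  apply vecNorm_le'
  intro i
  exact (abs_add_le _ _).trans (add_le_add (abs_le_vecNorm' i) (abs_le_vecNorm' i))

lemma isStoch_one' (hm : 1 ≤ m) : IsStoch m m (1 : Matrix (Fin m) (Fin m) ℝ) := by
  constructor
  · intro s a
    by_cases h : s = a <;> simp [Matrix.one_apply, h]
  · intro s
    simp [Matrix.one_apply]

lemma isStoch_mul' {A B : Matrix (Fin m) (Fin m) ℝ}
    (hA : IsStoch m m A) (hB : IsStoch m m B) : IsStoch m m (A * B) := by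
  constructor
  · intro s a
    rw [Matrix.mul_apply]
    exact Finset.sum_nonneg fun k _ => mul_nonneg (hA.1 s k) (hB.1 k a)
  · intro s
    simp only [Matrix.mul_apply]
    rw [Finset.sum_comm]
    calc ∑ k, ∑ a, A s k * B k a = ∑ k, A s k * ∑ a, B k a := by
          simp [Finset.mul_sum]
      _ = ∑ k, A s k := by simp [hB.2]
      _ = 1 := hA.2 s

lemma isStoch_Pmat' {p : Fin m → Fin n → Fin m → ℝ} (hp : IsTransKer m n p)
    {d : Matrix (Fin m) (Fin n) ℝ} (hd : IsStoch m n d) : IsStoch m m (Pmat p d) := by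
  constructor
  · intro s s'
    exact Finset.sum_nonneg fun a _ => mul_nonneg (hp.1 s a s') (hd.1 s a)
  · intro s
    unfold Pmat
    rw [Finset.sum_comm]
    calc ∑ a, ∑ s', p s a s' * d s a = ∑ a, (∑ s', p s a s') * d s a := by
          simp [Finset.sum_mul]
      _ = ∑ a, d s a := by simp [hp.2]
      _ = 1 := hd.2 s

lemma isStoch_Ppi' {p : Fin m → Fin n → Fin m → ℝ} (hp : IsTransKer m n p)
    (hm : 1 ≤ m) {π : ℕ → Matrix (Fin m) (Fin n) ℝ} (hπ : ∀ t, IsStoch m n (π t))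
    (t : ℕ) : IsStoch m m (Ppi p π t) := by
  induction t with
  | zero => exact isStoch_one' hm
  | succ t ih => exact isStoch_mul' ih (isStoch_Pmat' hp (hπ t))

lemma rowSumNorm_stoch' [Nonempty (Fin m)] {A : Matrix (Fin m) (Fin m) ℝ}
    (hA : IsStoch m m A) : rowSumNorm A = 1 := by
  unfold rowSumNorm
  have h : ∀ i, ∑ j, |A i j| = 1 := fun i => by
    rw [Finset.sum_congr rfl fun j _ => abs_of_nonneg (hA.1 i j)]
    exact hA.2 i
  simp only [h]
  exact ciSup_const

lemma rowSumNorm_mul_le' [Nonempty (Fin m)] (A B : Matrix (Fin m) (Fin m) ℝ) :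
    rowSumNorm (A * B) ≤ rowSumNorm A * rowSumNorm B := by
  apply rowSumNorm_le'
  intro i
  calc ∑ j, |(A * B) i j| ≤ ∑ j, ∑ k, |A i k| * |B k j| := by
        apply Finset.sum_le_sum
        intro j _
        rw [Matrix.mul_apply]
        refine (Finset.abs_sum_le_sum_abs _ _).trans (le_of_eq ?_)
        simp [abs_mul]
    _ = ∑ k, |A i k| * ∑ j, |B k j| := by
        rw [Finset.sum_comm]
        simp [Finset.mul_sum]
    _ ≤ ∑ k, |A i k| * rowSumNorm B :=
        Finset.sum_le_sum fun k _ =>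
          mul_le_mul_of_nonneg_left (rowsum_le_rowSumNorm' k) (abs_nonneg _)
    _ = (∑ k, |A i k|) * rowSumNorm B := by rw [Finset.sum_mul]
    _ ≤ rowSumNorm A * rowSumNorm B :=
        mul_le_mul_of_nonneg_right (rowsum_le_rowSumNorm' i) (rowSumNorm_nonneg' B)

lemma rowSumNorm_add_le' [Nonempty (Fin m)] (A B : Matrix (Fin m) (Fin n) ℝ) :
    rowSumNorm (A + B) ≤ rowSumNorm A + rowSumNorm B := by
  apply rowSumNorm_le'
  intro i
  calc ∑ j, |(A + B) i j| ≤ ∑ j, (|A i j| + |B i j|) := by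
        apply Finset.sum_le_sum
        intro j _
        simp only [Matrix.add_apply]
        exact abs_add_le _ _
    _ = (∑ j, |A i j|) + ∑ j, |B i j| := Finset.sum_add_distrib
    _ ≤ _ := add_le_add (rowsum_le_rowSumNorm' i) (rowsum_le_rowSumNorm' i)

lemma rowSumNorm_Pmat_sub' [Nonempty (Fin m)] {p : Fin m → Fin n → Fin m → ℝ}
    (hp : IsTransKer m n p) (d f : Matrix (Fin m) (Fin n) ℝ) :
    rowSumNorm (Pmat p d - Pmat p f) ≤ rowSumNorm (d - f) := by
  apply rowSumNorm_le'
  intro s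
  calc ∑ s', |(Pmat p d - Pmat p f) s s'|
      = ∑ s', |∑ a, p s a s' * (d s a - f s a)| := by
        apply Finset.sum_congr rfl
        intro s' _
        simp [Pmat, Matrix.sub_apply, mul_sub, Finset.sum_sub_distrib]
    _ ≤ ∑ s', ∑ a, p s a s' * |d s a - f s a| := by
        apply Finset.sum_le_sum
        intro s' _
        refine (Finset.abs_sum_le_sum_abs _ _).trans (le_of_eq ?_)
        refine Finset.sum_congr rfl fun a _ => ?_
        rw [abs_mul, abs_of_nonneg (hp.1 s a s')]
    _ = ∑ a, |d s a - f s a| * ∑ s', p s a s' := by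
        rw [Finset.sum_comm]
        refine Finset.sum_congr rfl fun a _ => ?_
        rw [Finset.mul_sum]
        exact Finset.sum_congr rfl fun s' _ => mul_comm _ _
    _ = ∑ a, |(d - f) s a| := by simp [hp.2, Matrix.sub_apply]
    _ ≤ rowSumNorm (d - f) := rowsum_le_rowSumNorm' s

lemma rowSumNorm_Ppi_sub' [Nonempty (Fin m)] {p : Fin m → Fin n → Fin m → ℝ}
    (hp : IsTransKer m n p) (hm : 1 ≤ m) {π₁ π₂ : ℕ → Matrix (Fin m) (Fin n) ℝ}
    (h₁ : ∀ t, IsStoch m n (π₁ t)) (h₂ : ∀ t, IsStoch m n (π₂ t)) (t : ℕ) :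
    rowSumNorm (Ppi p π₁ t - Ppi p π₂ t) ≤
      ∑ i ∈ Finset.range t, rowSumNorm (π₁ i - π₂ i) := by
  induction t with
  | zero =>
      simp only [Ppi, sub_self, Finset.range_zero, Finset.sum_empty]
      apply le_of_eq
      unfold rowSumNorm
      simp only [Matrix.zero_apply, abs_zero, Finset.sum_const_zero]
      exact ciSup_const
  | succ t ih =>
      have key : Ppi p π₁ (t + 1) - Ppi p π₂ (t + 1) =
          Ppi p π₁ t * (Pmat p (π₁ t) - Pmat p (π₂ t)) +
            (Ppi p π₁ t - Ppi p π₂ t) * Pmat p (π₂ t) := by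
        show Ppi p π₁ t * Pmat p (π₁ t) - Ppi p π₂ t * Pmat p (π₂ t) = _
        rw [Matrix.mul_sub, Matrix.sub_mul]
        abel
      rw [key]
      calc rowSumNorm _ ≤
          rowSumNorm (Ppi p π₁ t * (Pmat p (π₁ t) - Pmat p (π₂ t))) +
            rowSumNorm ((Ppi p π₁ t - Ppi p π₂ t) * Pmat p (π₂ t)) :=
            rowSumNorm_add_le' _ _
        _ ≤ rowSumNorm (Ppi p π₁ t) * rowSumNorm (Pmat p (π₁ t) - Pmat p (π₂ t)) +
            rowSumNorm (Ppi p π₁ t - Ppi p π₂ t) * rowSumNorm (Pmat p (π₂ t)) :=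
            add_le_add (rowSumNorm_mul_le' _ _) (rowSumNorm_mul_le' _ _)
        _ = rowSumNorm (Pmat p (π₁ t) - Pmat p (π₂ t)) +
            rowSumNorm (Ppi p π₁ t - Ppi p π₂ t) := by
            rw [rowSumNorm_stoch' (isStoch_Ppi' hp hm h₁ t),
              rowSumNorm_stoch' (isStoch_Pmat' hp (h₂ t)), one_mul, mul_one]
        _ ≤ rowSumNorm (π₁ t - π₂ t) + ∑ i ∈ Finset.range t, rowSumNorm (π₁ i - π₂ i) :=
            add_le_add (rowSumNorm_Pmat_sub' hp _ _) ih
        _ = ∑ i ∈ Finset.range (t + 1), rowSumNorm (π₁ i - π₂ i) := by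
            rw [Finset.sum_range_succ]; ring

lemma vecNorm_stochMulVec_le' [Nonempty (Fin m)] {A : Matrix (Fin m) (Fin m) ℝ}
    (hA : IsStoch m m A) (v : Fin m → ℝ) : vecNorm (A *ᵥ v) ≤ vecNorm v := by
  apply vecNorm_le'
  intro i
  calc |(A *ᵥ v) i| ≤ ∑ j, A i j * |v j| := by
        rw [Matrix.mulVec, dotProduct]
        refine (Finset.abs_sum_le_sum_abs _ _).trans (le_of_eq ?_)
        refine Finset.sum_congr rfl fun j _ => ?_
        rw [abs_mul, abs_of_nonneg (hA.1 i j)]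
    _ ≤ ∑ j, A i j * vecNorm v :=
        Finset.sum_le_sum fun j _ =>
          mul_le_mul_of_nonneg_left (abs_le_vecNorm' j) (hA.1 i j)
    _ = vecNorm v := by rw [← Finset.sum_mul, hA.2, one_mul]

lemma vecNorm_mulVec_le' [Nonempty (Fin m)] (M : Matrix (Fin m) (Fin m) ℝ)
    (v : Fin m → ℝ) : vecNorm (M *ᵥ v) ≤ rowSumNorm M * vecNorm v := by
  apply vecNorm_le'
  intro i
  calc |(M *ᵥ v) i| ≤ ∑ j, |M i j| * |v j| := by
        rw [Matrix.mulVec, dotProduct]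
        refine (Finset.abs_sum_le_sum_abs _ _).trans (le_of_eq ?_)
        exact Finset.sum_congr rfl fun j _ => abs_mul _ _
    _ ≤ ∑ j, |M i j| * vecNorm v :=
        Finset.sum_le_sum fun j _ =>
          mul_le_mul_of_nonneg_left (abs_le_vecNorm' j) (abs_nonneg _)
    _ = (∑ j, |M i j|) * vecNorm v := by rw [Finset.sum_mul]
    _ ≤ rowSumNorm M * vecNorm v :=
        mul_le_mul_of_nonneg_right (rowsum_le_rowSumNorm' i) (vecNorm_nonneg' v)

lemma vecNorm_Rvec_le' [Nonempty (Fin m)] {C : ℝ} {R d : Matrix (Fin m) (Fin n) ℝ}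
    (hR : ∀ s a, |R s a| ≤ C) (hd : IsStoch m n d) : vecNorm (Rvec R d) ≤ C := by
  apply vecNorm_le'
  intro s
  calc |∑ a, R s a * d s a| ≤ ∑ a, |R s a| * d s a := by
        refine (Finset.abs_sum_le_sum_abs _ _).trans (le_of_eq ?_)
        refine Finset.sum_congr rfl fun a _ => ?_
        rw [abs_mul, abs_of_nonneg (hd.1 s a)]
    _ ≤ ∑ a, C * d s a :=
        Finset.sum_le_sum fun a _ => mul_le_mul_of_nonneg_right (hR s a) (hd.1 s a)
    _ = C := by rw [← Finset.mul_sum, hd.2 s, mul_one]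

lemma vecNorm_Rvec_sub' [Nonempty (Fin m)] {C : ℝ} (hC : 0 ≤ C)
    {R d f : Matrix (Fin m) (Fin n) ℝ} (hR : ∀ s a, |R s a| ≤ C) :
    vecNorm (Rvec R d - Rvec R f) ≤ C * rowSumNorm (d - f) := by
  apply vecNorm_le'
  intro s
  calc |(Rvec R d - Rvec R f) s| = |∑ a, R s a * (d s a - f s a)| := by
        simp [Rvec, mul_sub, Finset.sum_sub_distrib]
    _ ≤ ∑ a, |R s a| * |d s a - f s a| := by
        refine (Finset.abs_sum_le_sum_abs _ _).trans (le_of_eq ?_)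
        exact Finset.sum_congr rfl fun a _ => abs_mul _ _
    _ ≤ ∑ a, C * |d s a - f s a| :=
        Finset.sum_le_sum fun a _ =>
          mul_le_mul_of_nonneg_right (hR s a) (abs_nonneg _)
    _ = C * ∑ a, |(d - f) s a| := by rw [← Finset.mul_sum]; simp [Matrix.sub_apply]
    _ ≤ C * rowSumNorm (d - f) :=
        mul_le_mul_of_nonneg_left (rowsum_le_rowSumNorm' s) hC

end aux

/-- `‖P_t^{π₁} R_{d_t} − P_t^{π₂} R_{f_t}‖_∞ ≤ C Σ_{i=0}^{t} ‖d_i − f_i‖_∞`. -/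
theorem stmt_3 (m n : ℕ) (hm : 1 ≤ m) (hn : 1 ≤ n)
    (p : Fin m → Fin n → Fin m → ℝ) (hp : IsTransKer m n p)
    (C : ℝ) (hC : 0 < C)
    (R : Matrix (Fin m) (Fin n) ℝ) (hR : ∀ s a, |R s a| ≤ C)
    (π₁ π₂ : ℕ → Matrix (Fin m) (Fin n) ℝ)
    (h₁ : ∀ t, IsStoch m n (π₁ t)) (h₂ : ∀ t, IsStoch m n (π₂ t))
    (t : ℕ) :
    vecNorm (Ppi p π₁ t *ᵥ Rvec R (π₁ t) - Ppi p π₂ t *ᵥ Rvec R (π₂ t)) ≤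
      C * ∑ i ∈ Finset.range (t + 1), rowSumNorm (π₁ i - π₂ i) := by
  haveI : Nonempty (Fin m) := ⟨⟨0, hm⟩⟩
  have key : Ppi p π₁ t *ᵥ Rvec R (π₁ t) - Ppi p π₂ t *ᵥ Rvec R (π₂ t) =
      Ppi p π₁ t *ᵥ (Rvec R (π₁ t) - Rvec R (π₂ t)) +
        (Ppi p π₁ t - Ppi p π₂ t) *ᵥ Rvec R (π₂ t) := by
    rw [Matrix.mulVec_sub, Matrix.sub_mulVec]
    abel
  rw [key]
  have h1 : vecNorm (Ppi p π₁ t *ᵥ (Rvec R (π₁ t) - Rvec R (π₂ t))) ≤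
      C * rowSumNorm (π₁ t - π₂ t) :=
    (vecNorm_stochMulVec_le' (isStoch_Ppi' hp hm h₁ t) _).trans
      (vecNorm_Rvec_sub' hC.le hR)
  have h2 : vecNorm ((Ppi p π₁ t - Ppi p π₂ t) *ᵥ Rvec R (π₂ t)) ≤
      (∑ i ∈ Finset.range t, rowSumNorm (π₁ i - π₂ i)) * C := by
    refine (vecNorm_mulVec_le' _ _).trans ?_
    have hv : vecNorm (Rvec R (π₂ t)) ≤ C := vecNorm_Rvec_le' hR (h₂ t)
    have hv0 : 0 ≤ vecNorm (Rvec R (π₂ t)) := vecNorm_nonneg' _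
    calc rowSumNorm (Ppi p π₁ t - Ppi p π₂ t) * vecNorm (Rvec R (π₂ t)) ≤
        (∑ i ∈ Finset.range t, rowSumNorm (π₁ i - π₂ i)) * vecNorm (Rvec R (π₂ t)) :=
          mul_le_mul_of_nonneg_right (rowSumNorm_Ppi_sub' hp hm h₁ h₂ t) hv0
      _ ≤ _ := mul_le_mul_of_nonneg_left hv
          (Finset.sum_nonneg fun i _ => rowSumNorm_nonneg' _)
  calc vecNorm _ ≤ _ + _ := vecNorm_add_le' _ _
    _ ≤ C * rowSumNorm (π₁ t - π₂ t) +
        (∑ i ∈ Finset.range t, rowSumNorm (π₁ i - π₂ i)) * C := add_le_add h1 h2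
    _ = C * ∑ i ∈ Finset.range (t + 1), rowSumNorm (π₁ i - π₂ i) := by
        rw [Finset.sum_range_succ]; ring
end

section
/- Let R ∈ ℝ^{m×n} have every entry of absolute value at most C, let K := C/(1−β), and let T ≥ 1. Then the map π ↦ V_T(π,R) from the metric space (Π_MR, μ) to (ℝ^m, ‖·‖_∞) is Lipschitz continuous with Lipschitz constant K(δ^T − β^T)/(δ^{T−1}(δ − β)); that is, ‖V_T(π₁,R) − V_T(π₂,R)‖_∞ ≤ [K(δ^T − β^T)/(δ^{T−1}(δ − β))] · μ(π₁,π₂) for all policies π₁, π₂. -/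
open Finset Filter Matrix

/-!
With the row-sum norm on matrices and the sup norm on vectors, `d ↦ P_d` and `d ↦ R_d` are linear
of norm at most `1` and `C`, and stochastic matrices have norm at most `1`. Splitting
`A B - A' B' = A (B - B') + (A - A') B'` gives by induction
`‖P_t^{π₁} - P_t^{π₂}‖ ≤ ∑_{k<t} ‖d_k - f_k‖`, hence
`‖P_t^{π₁} R_{d_t} - P_t^{π₂} R_{f_t}‖ ≤ C ∑_{k≤t} ‖d_k - f_k‖`. Abel summation bounds the
discounted sum of these partial sums by `C/(1-β) ∑_{k<T} β^k ‖d_k - f_k‖`, and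
`‖d_k - f_k‖ ≤ δ^{-k} μ(π₁, π₂)` leaves `∑_{k<T} (β/δ)^k = (δ^T - β^T)/(δ^{T-1}(δ - β))`.
-/

open scoped Matrix.Norms.Operator

namespace Matrix

variable {ι κ ν α : Type*} [Fintype ι] [Fintype κ]

section SeminormedAddCommGroup

variable [SeminormedAddCommGroup α]

theorem linfty_opNorm_le_iff {A : Matrix ι κ α} {c : ℝ} (hc : 0 ≤ c) :
    ‖A‖ ≤ c ↔ ∀ i, ∑ j, ‖A i j‖ ≤ c := by
  change ‖fun i => WithLp.toLp 1 (A i)‖ ≤ c ↔ _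
  simp only [pi_norm_le_iff_of_nonneg hc, PiLp.norm_eq_of_L1]

theorem sum_norm_le_linfty_opNorm (A : Matrix ι κ α) (i : ι) : ∑ j, ‖A i j‖ ≤ ‖A‖ :=
  (linfty_opNorm_le_iff (norm_nonneg A)).1 le_rfl i

end SeminormedAddCommGroup

variable [NonUnitalSeminormedRing α]

theorem linfty_opNorm_mulVec_sub_mulVec_le (A A' : Matrix ι κ α) (v v' : κ → α) :
    ‖A *ᵥ v - A' *ᵥ v'‖ ≤ ‖A‖ * ‖v - v'‖ + ‖A - A'‖ * ‖v'‖ := by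
  have hsplit : A *ᵥ v - A' *ᵥ v' = A *ᵥ (v - v') + (A - A') *ᵥ v' := by
    rw [mulVec_sub, sub_mulVec]; abel
  rw [hsplit]
  exact (norm_add_le _ _).trans (add_le_add (linfty_opNorm_mulVec _ _) (linfty_opNorm_mulVec _ _))

theorem linfty_opNorm_mul_sub_mul_le [Fintype ν] (A A' : Matrix ι κ α) (B B' : Matrix κ ν α) :
    ‖A * B - A' * B'‖ ≤ ‖A‖ * ‖B - B'‖ + ‖A - A'‖ * ‖B'‖ := by
  have hsplit : A * B - A' * B' = A * (B - B') + (A - A') * B' := by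
    rw [Matrix.mul_sub, Matrix.sub_mul]; abel
  rw [hsplit]
  exact (norm_add_le _ _).trans (add_le_add (linfty_opNorm_mul _ _) (linfty_opNorm_mul _ _))

end Matrix

variable {l m n : ℕ}

theorem vecNorm_eq_norm (v : Fin m → ℝ) : vecNorm v = ‖v‖ :=
  le_antisymm (Real.iSup_le (fun i => norm_le_pi_norm v i) (norm_nonneg v))
    ((pi_norm_le_iff_of_nonneg (Real.iSup_nonneg fun i => abs_nonneg (v i))).2
      fun i => le_ciSup (f := fun i => |v i|) (Set.finite_range _).bddAbove i)

theorem rowSumNorm_eq_norm (A : Matrix (Fin m) (Fin n) ℝ) : rowSumNorm A = ‖A‖ :=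
  le_antisymm (Real.iSup_le (Matrix.sum_norm_le_linfty_opNorm A) (norm_nonneg A))
    ((Matrix.linfty_opNorm_le_iff (Real.iSup_nonneg fun i =>
      Finset.sum_nonneg fun j _ => abs_nonneg (A i j))).2
      fun i => le_ciSup (f := fun i => ∑ j, |A i j|) (Set.finite_range _).bddAbove i)

theorem IsStoch.norm_le_one {d : Matrix (Fin m) (Fin n) ℝ} (hd : IsStoch m n d) : ‖d‖ ≤ 1 :=
  (Matrix.linfty_opNorm_le_iff zero_le_one).2 fun s => by
    simp only [Real.norm_eq_abs, abs_of_nonneg (hd.1 s _), hd.2 s, le_rfl]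

theorem isStoch_one : IsStoch m m 1 :=
  ⟨fun s s' => by by_cases h : s = s' <;> simp [Matrix.one_apply, h],
    fun s => by simp [Matrix.one_apply]⟩

theorem IsStoch.mul {A : Matrix (Fin l) (Fin m) ℝ} {B : Matrix (Fin m) (Fin n) ℝ}
    (hA : IsStoch l m A) (hB : IsStoch m n B) : IsStoch l n (A * B) := by
  simp only [IsStoch, Matrix.mul_apply]
  refine ⟨fun i j => Finset.sum_nonneg fun k _ => mul_nonneg (hA.1 i k) (hB.1 k j), fun i => ?_⟩
  rw [Finset.sum_comm]
  simp only [← Finset.mul_sum, hB.2, mul_one, hA.2 i]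

section Transition

variable {p : Fin m → Fin n → Fin m → ℝ}

theorem IsStoch.pmat (hp : IsTransKer m n p) {d : Matrix (Fin m) (Fin n) ℝ}
    (hd : IsStoch m n d) : IsStoch m m (Pmat p d) := by
  refine ⟨fun s s' => Finset.sum_nonneg fun a _ => mul_nonneg (hp.1 s a s') (hd.1 s a),
    fun s => ?_⟩
  simp only [Pmat]
  rw [Finset.sum_comm]
  simp only [← Finset.sum_mul, hp.2 s, one_mul, hd.2 s]

theorem isStoch_ppi (hp : IsTransKer m n p) {π : ℕ → Matrix (Fin m) (Fin n) ℝ}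
    (hπ : ∀ t, IsStoch m n (π t)) (t : ℕ) : IsStoch m m (Ppi p π t) := by
  induction t with
  | zero => exact isStoch_one
  | succ t ih => exact ih.mul ((hπ t).pmat hp)

theorem pmat_sub (d f : Matrix (Fin m) (Fin n) ℝ) : Pmat p d - Pmat p f = Pmat p (d - f) := by
  ext s s'
  simp only [Pmat, Matrix.sub_apply, mul_sub, Finset.sum_sub_distrib]

theorem norm_pmat_le (hp : IsTransKer m n p) (g : Matrix (Fin m) (Fin n) ℝ) :
    ‖Pmat p g‖ ≤ ‖g‖ := by
  refine (Matrix.linfty_opNorm_le_iff (norm_nonneg g)).2 fun s => ?_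
  calc ∑ s', ‖Pmat p g s s'‖ ≤ ∑ s', ∑ a, p s a s' * ‖g s a‖ := by
        refine Finset.sum_le_sum fun s' _ => (norm_sum_le _ _).trans_eq ?_
        simp only [norm_mul, Real.norm_of_nonneg (hp.1 s _ s')]
    _ = ∑ a, ‖g s a‖ := by
        rw [Finset.sum_comm]
        simp only [← Finset.sum_mul, hp.2 s, one_mul]
    _ ≤ ‖g‖ := Matrix.sum_norm_le_linfty_opNorm g s

end Transition

theorem rvec_sub (R d f : Matrix (Fin m) (Fin n) ℝ) : Rvec R d - Rvec R f = Rvec R (d - f) := by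
  ext s
  simp only [Rvec, Pi.sub_apply, Matrix.sub_apply, mul_sub, Finset.sum_sub_distrib]

theorem norm_rvec_le {C : ℝ} (hC : 0 ≤ C) {R : Matrix (Fin m) (Fin n) ℝ}
    (hR : ∀ s a, |R s a| ≤ C) (g : Matrix (Fin m) (Fin n) ℝ) : ‖Rvec R g‖ ≤ C * ‖g‖ := by
  refine (pi_norm_le_iff_of_nonneg (by positivity)).2 fun s => ?_
  calc ‖Rvec R g s‖ ≤ ∑ a, C * ‖g s a‖ := by
        refine (norm_sum_le _ _).trans (Finset.sum_le_sum fun a _ => ?_)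
        rw [norm_mul]
        exact mul_le_mul_of_nonneg_right (hR s a) (norm_nonneg _)
    _ ≤ C * ‖g‖ := by
        rw [← Finset.mul_sum]
        exact mul_le_mul_of_nonneg_left (Matrix.sum_norm_le_linfty_opNorm g s) hC

section Policies

variable {p : Fin m → Fin n → Fin m → ℝ} {π₁ π₂ : ℕ → Matrix (Fin m) (Fin n) ℝ}

theorem norm_ppi_sub_le (hp : IsTransKer m n p) (h₁ : ∀ t, IsStoch m n (π₁ t))
    (h₂ : ∀ t, IsStoch m n (π₂ t)) (t : ℕ) :
    ‖Ppi p π₁ t - Ppi p π₂ t‖ ≤ ∑ k ∈ Finset.range t, ‖π₁ k - π₂ k‖ := by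
  induction t with
  | zero => simp [Ppi]
  | succ t ih =>
    calc ‖Ppi p π₁ t * Pmat p (π₁ t) - Ppi p π₂ t * Pmat p (π₂ t)‖
        ≤ ‖Ppi p π₁ t‖ * ‖Pmat p (π₁ t) - Pmat p (π₂ t)‖
            + ‖Ppi p π₁ t - Ppi p π₂ t‖ * ‖Pmat p (π₂ t)‖ :=
          Matrix.linfty_opNorm_mul_sub_mul_le _ _ _ _
      _ ≤ 1 * ‖π₁ t - π₂ t‖ + (∑ k ∈ Finset.range t, ‖π₁ k - π₂ k‖) * 1 := by
          rw [pmat_sub]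
          gcongr
          · exact (isStoch_ppi hp h₁ t).norm_le_one
          · exact norm_pmat_le hp _
          · exact ((h₂ t).pmat hp).norm_le_one
      _ = ∑ k ∈ Finset.range (t + 1), ‖π₁ k - π₂ k‖ := by
          rw [Finset.sum_range_succ]; ring

theorem norm_ppi_mulVec_rvec_sub_le (hp : IsTransKer m n p) {C : ℝ} (hC : 0 ≤ C)
    {R : Matrix (Fin m) (Fin n) ℝ} (hR : ∀ s a, |R s a| ≤ C)
    (h₁ : ∀ t, IsStoch m n (π₁ t)) (h₂ : ∀ t, IsStoch m n (π₂ t)) (t : ℕ) :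
    ‖Ppi p π₁ t *ᵥ Rvec R (π₁ t) - Ppi p π₂ t *ᵥ Rvec R (π₂ t)‖ ≤
      C * ∑ k ∈ Finset.range (t + 1), ‖π₁ k - π₂ k‖ := by
  calc ‖Ppi p π₁ t *ᵥ Rvec R (π₁ t) - Ppi p π₂ t *ᵥ Rvec R (π₂ t)‖
      ≤ ‖Ppi p π₁ t‖ * ‖Rvec R (π₁ t) - Rvec R (π₂ t)‖
          + ‖Ppi p π₁ t - Ppi p π₂ t‖ * ‖Rvec R (π₂ t)‖ :=
        Matrix.linfty_opNorm_mulVec_sub_mulVec_le _ _ _ _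
    _ ≤ 1 * (C * ‖π₁ t - π₂ t‖) + (∑ k ∈ Finset.range t, ‖π₁ k - π₂ k‖) * (C * 1) := by
        rw [rvec_sub]
        gcongr
        · exact (isStoch_ppi hp h₁ t).norm_le_one
        · exact norm_rvec_le hC hR _
        · exact norm_ppi_sub_le hp h₁ h₂ t
        · exact (norm_rvec_le hC hR _).trans (by gcongr; exact (h₂ t).norm_le_one)
    _ = C * ∑ k ∈ Finset.range (t + 1), ‖π₁ k - π₂ k‖ := by
        rw [Finset.sum_range_succ]; ring

theorem VT_eq_sum (β : ℝ) (p : Fin m → Fin n → Fin m → ℝ) (π : ℕ → Matrix (Fin m) (Fin n) ℝ)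
    (R : Matrix (Fin m) (Fin n) ℝ) (T : ℕ) :
    VT β p π R T = ∑ t ∈ Finset.range T, β ^ t • (Ppi p π t *ᵥ Rvec R (π t)) := by
  ext x
  simp only [VT, Finset.sum_apply, Pi.smul_apply, smul_eq_mul]

theorem norm_VT_sub_le (hp : IsTransKer m n p) {β : ℝ} (hβ0 : 0 ≤ β) {C : ℝ} (hC : 0 ≤ C)
    {R : Matrix (Fin m) (Fin n) ℝ} (hR : ∀ s a, |R s a| ≤ C)
    (h₁ : ∀ t, IsStoch m n (π₁ t)) (h₂ : ∀ t, IsStoch m n (π₂ t)) (T : ℕ) :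
    ‖VT β p π₁ R T - VT β p π₂ R T‖ ≤
      C * ∑ t ∈ Finset.range T, β ^ t * ∑ k ∈ Finset.range (t + 1), ‖π₁ k - π₂ k‖ := by
  rw [VT_eq_sum, VT_eq_sum, ← Finset.sum_sub_distrib, Finset.mul_sum]
  refine (norm_sum_le _ _).trans (Finset.sum_le_sum fun t _ => ?_)
  rw [← smul_sub, norm_smul, Real.norm_of_nonneg (pow_nonneg hβ0 t), mul_left_comm]
  gcongr
  exact norm_ppi_mulVec_rvec_sub_le hp hC hR h₁ h₂ t

end Policies

theorem one_sub_mul_sum_pow_mul_partialSum_add (β : ℝ) (D : ℕ → ℝ) (T : ℕ) :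
    (1 - β) * ∑ t ∈ Finset.range T, β ^ t * ∑ k ∈ Finset.range (t + 1), D k
      + β ^ T * ∑ k ∈ Finset.range T, D k = ∑ k ∈ Finset.range T, β ^ k * D k := by
  induction T with
  | zero => simp
  | succ T ih =>
    rw [Finset.sum_range_succ (fun k => β ^ k * D k), ← ih, Finset.sum_range_succ,
      Finset.sum_range_succ D]
    ring

theorem sum_pow_mul_partialSum_le {β : ℝ} (hβ0 : 0 ≤ β) (hβ1 : β < 1) {D : ℕ → ℝ}
    (hD : ∀ k, 0 ≤ D k) (T : ℕ) :
    ∑ t ∈ Finset.range T, β ^ t * ∑ k ∈ Finset.range (t + 1), D k ≤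
      (1 - β)⁻¹ * ∑ k ∈ Finset.range T, β ^ k * D k := by
  rw [le_inv_mul_iff₀ (sub_pos.2 hβ1), ← one_sub_mul_sum_pow_mul_partialSum_add β D T]
  have : 0 ≤ β ^ T * ∑ k ∈ Finset.range T, D k := by
    have := Finset.sum_nonneg fun k (_ : k ∈ Finset.range T) => hD k
    positivity
  linarith

theorem sum_range_div_pow_eq {β δ : ℝ} (hδ : δ ≠ 0) (hβδ : β ≠ δ) (T : ℕ) :
    ∑ k ∈ Finset.range T, (β / δ) ^ k = (δ ^ T - β ^ T) / (δ ^ (T - 1) * (δ - β)) := by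
  have hsub : δ - β ≠ 0 := sub_ne_zero.2 hβδ.symm
  rcases T with _ | T
  · simp
  · rw [geom_sum_eq (by rwa [Ne, div_eq_one_iff_eq hδ]), Nat.add_sub_cancel, div_pow]
    field_simp
    ring

theorem pow_mul_norm_sub_le_policyDist {δ : ℝ} (hδ0 : 0 ≤ δ) (hδ1 : δ ≤ 1)
    {π₁ π₂ : ℕ → Matrix (Fin m) (Fin n) ℝ}
    (h₁ : ∀ t, IsStoch m n (π₁ t)) (h₂ : ∀ t, IsStoch m n (π₂ t)) (k : ℕ) :
    δ ^ k * ‖π₁ k - π₂ k‖ ≤ policyDist δ π₁ π₂ := by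
  have hbdd : ∀ t, δ ^ t * ‖π₁ t - π₂ t‖ ≤ 1 * (1 + 1) := fun t => by
    gcongr
    · exact pow_le_one₀ hδ0 hδ1
    · exact (norm_sub_le _ _).trans (add_le_add (h₁ t).norm_le_one (h₂ t).norm_le_one)
  simp only [policyDist, rowSumNorm_eq_norm]
  exact le_ciSup ⟨_, Set.forall_mem_range.2 hbdd⟩ k

theorem stmt_5_general (m n : ℕ)
    (p : Fin m → Fin n → Fin m → ℝ) (hp : IsTransKer m n p)
    (β : ℝ) (hβ0 : 0 < β) (hβ1 : β < 1)
    (C : ℝ) (hC : 0 < C)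
    (δ : ℝ) (hδ : β < δ) (hδ1 : δ < 1)
    (R : Matrix (Fin m) (Fin n) ℝ) (hR : ∀ s a, |R s a| ≤ C)
    (T : ℕ)
    (π₁ π₂ : ℕ → Matrix (Fin m) (Fin n) ℝ)
    (h₁ : ∀ t, IsStoch m n (π₁ t)) (h₂ : ∀ t, IsStoch m n (π₂ t)) :
    vecNorm (VT β p π₁ R T - VT β p π₂ R T) ≤
      C / (1 - β) * (δ ^ T - β ^ T) / (δ ^ (T - 1) * (δ - β)) * policyDist δ π₁ π₂ := by
  have hδ0 : 0 < δ := hβ0.trans hδ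
  have hdist : ∀ k, β ^ k * ‖π₁ k - π₂ k‖ ≤ (β / δ) ^ k * policyDist δ π₁ π₂ := fun k => by
    rw [div_pow, div_mul_eq_mul_div, le_div_iff₀ (pow_pos hδ0 k), mul_right_comm, mul_assoc]
    exact mul_le_mul_of_nonneg_left
      (pow_mul_norm_sub_le_policyDist hδ0.le hδ1.le h₁ h₂ k) (pow_nonneg hβ0.le k)
  rw [vecNorm_eq_norm, mul_div_assoc, ← sum_range_div_pow_eq hδ0.ne' hδ.ne]
  calc ‖VT β p π₁ R T - VT β p π₂ R T‖
      ≤ C * ∑ t ∈ Finset.range T, β ^ t * ∑ k ∈ Finset.range (t + 1), ‖π₁ k - π₂ k‖ :=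
        norm_VT_sub_le hp hβ0.le hC.le hR h₁ h₂ T
    _ ≤ C * ((1 - β)⁻¹ * ∑ k ∈ Finset.range T, β ^ k * ‖π₁ k - π₂ k‖) := by
        gcongr
        exact sum_pow_mul_partialSum_le hβ0.le hβ1 (fun k => norm_nonneg _) T
    _ ≤ C * ((1 - β)⁻¹ * ∑ k ∈ Finset.range T, (β / δ) ^ k * policyDist δ π₁ π₂) := by
        have : 0 < 1 - β := sub_pos.2 hβ1
        gcongr C * ((1 - β)⁻¹ * ?_)
        exact Finset.sum_le_sum fun k _ => hdist k
    _ = C / (1 - β) * (∑ k ∈ Finset.range T, (β / δ) ^ k) * policyDist δ π₁ π₂ := by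
        rw [← Finset.sum_mul]; ring

/-- the map `π ↦ V_T(π,R)` is Lipschitz with constant
`K(δ^T − β^T)/(δ^{T−1}(δ − β))` with respect to the metric `μ`. -/
theorem stmt_5 (m n : ℕ) (hm : 1 ≤ m) (hn : 1 ≤ n)
    (p : Fin m → Fin n → Fin m → ℝ) (hp : IsTransKer m n p)
    (β : ℝ) (hβ0 : 0 < β) (hβ1 : β < 1)
    (C : ℝ) (hC : 0 < C)
    (δ : ℝ) (hδ : β < δ) (hδ1 : δ < 1)
    (R : Matrix (Fin m) (Fin n) ℝ) (hR : ∀ s a, |R s a| ≤ C)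
    (T : ℕ) (hT : 1 ≤ T)
    (π₁ π₂ : ℕ → Matrix (Fin m) (Fin n) ℝ)
    (h₁ : ∀ t, IsStoch m n (π₁ t)) (h₂ : ∀ t, IsStoch m n (π₂ t)) :
    vecNorm (VT β p π₁ R T - VT β p π₂ R T) ≤
      C / (1 - β) * (δ ^ T - β ^ T) / (δ ^ (T - 1) * (δ - β)) * policyDist δ π₁ π₂ :=
  stmt_5_general m n p hp β hβ0 hβ1 C hC δ hδ hδ1 R hR T π₁ π₂ h₁ h₂
end

section
/- Let R ∈ ℝ^{m×n} have every entry of absolute value at most C. Then for every Markovian randomized policy π, every state x and every T ≥ 1, J_T(π,γ,R)(x) > 0 and exp(−|γ| C β^T) · J_T(π,γ,R)(x) ≤ J_{T+1}(π,γ,R)(x) ≤ exp(|γ| C β^T) · J_T(π,γ,R)(x). -/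
open Finset Filter Matrix

lemma stoch_exists_pos {ι : Type*} [Fintype ι] (w : ι → ℝ)
    (h0 : ∀ i, 0 ≤ w i) (h1 : ∑ i, w i = 1) : ∃ i, 0 < w i := by
  by_contra h
  push_neg at h
  have : ∑ i, w i ≤ 0 := Finset.sum_nonpos (fun i _ => h i)
  linarith

lemma stoch_sum_pos {ι : Type*} [Fintype ι] (w v : ι → ℝ)
    (h0 : ∀ i, 0 ≤ w i) (h1 : ∑ i, w i = 1) (hv : ∀ i, 0 < v i) :
    0 < ∑ i, w i * v i := by
  obtain ⟨i, hi⟩ := stoch_exists_pos w h0 h1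
  exact Finset.sum_pos' (fun j _ => mul_nonneg (h0 j) (hv j).le)
    ⟨i, Finset.mem_univ i, mul_pos hi (hv i)⟩

lemma stoch_sum_le {ι : Type*} [Fintype ι] (w v : ι → ℝ) (c : ℝ)
    (h0 : ∀ i, 0 ≤ w i) (h1 : ∑ i, w i = 1) (hv : ∀ i, v i ≤ c) :
    ∑ i, w i * v i ≤ c := by
  calc ∑ i, w i * v i ≤ ∑ i, w i * c :=
        Finset.sum_le_sum (fun i _ => mul_le_mul_of_nonneg_left (hv i) (h0 i))
    _ = c := by rw [← Finset.sum_mul, h1, one_mul]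

lemma stoch_le_sum {ι : Type*} [Fintype ι] (w v : ι → ℝ) (c : ℝ)
    (h0 : ∀ i, 0 ≤ w i) (h1 : ∑ i, w i = 1) (hv : ∀ i, c ≤ v i) :
    c ≤ ∑ i, w i * v i := by
  calc c = ∑ i, w i * c := by rw [← Finset.sum_mul, h1, one_mul]
    _ ≤ ∑ i, w i * v i :=
        Finset.sum_le_sum (fun i _ => mul_le_mul_of_nonneg_left (hv i) (h0 i))

lemma wsum_le_wsum {ι : Type*} [Fintype ι] (w v u : ι → ℝ)
    (h0 : ∀ i, 0 ≤ w i) (hv : ∀ i, v i ≤ u i) :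
    ∑ i, w i * v i ≤ ∑ i, w i * u i :=
  Finset.sum_le_sum (fun i _ => mul_le_mul_of_nonneg_left (hv i) (h0 i))

lemma Qrev_succ {m n : ℕ} (β γ : ℝ) (p : Fin m → Fin n → Fin m → ℝ)
    (π : ℕ → Matrix (Fin m) (Fin n) ℝ) (R : Matrix (Fin m) (Fin n) ℝ)
    (T k : ℕ) (s : Fin m) (a : Fin n) :
    Qrev β γ p π R T (k + 1) s a =
      Real.exp (γ * β ^ (T - 1 - (k + 1)) * R s a) *
        ∑ s', p s a s' * ∑ a', π (T - 1 - k) s' a' * Qrev β γ p π R T k s' a' := rfl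

/-- `J_T(π,γ,R)(x) > 0` and
`exp(−|γ|Cβ^T)·J_T ≤ J_{T+1} ≤ exp(|γ|Cβ^T)·J_T`. -/
theorem stmt_10 (m n : ℕ) (hm : 1 ≤ m) (hn : 1 ≤ n)
    (p : Fin m → Fin n → Fin m → ℝ) (hp : IsTransKer m n p)
    (β : ℝ) (hβ0 : 0 < β) (hβ1 : β < 1)
    (γ : ℝ) (hγ : γ ≠ 0)
    (C : ℝ) (hC : 0 < C)
    (R : Matrix (Fin m) (Fin n) ℝ) (hR : ∀ s a, |R s a| ≤ C)
    (π : ℕ → Matrix (Fin m) (Fin n) ℝ) (hπ : ∀ t, IsStoch m n (π t))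
    (x : Fin m) (T : ℕ) (hT : 1 ≤ T) :
    0 < JT β γ p π R T x ∧
    Real.exp (-(|γ| * C * β ^ T)) * JT β γ p π R T x ≤ JT β γ p π R (T + 1) x ∧
    JT β γ p π R (T + 1) x ≤ Real.exp (|γ| * C * β ^ T) * JT β γ p π R T x := by
  set E := |γ| * C * β ^ T with hE
  have hppos := hp.1
  have hpsum := hp.2
  -- positivity of Q matrices
  have Qpos : ∀ (T' k : ℕ) (s : Fin m) (a : Fin n), 0 < Qrev β γ p π R T' k s a := by
    intro T' k
    induction k with
    | zero => intro s a; exact Real.exp_pos _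
    | succ k ih =>
      intro s a
      show 0 < Real.exp _ * ∑ s', p s a s' *
        ∑ a', π (T' - 1 - k) s' a' * Qrev β γ p π R T' k s' a'
      refine mul_pos (Real.exp_pos _) ?_
      refine stoch_sum_pos _ _ (hppos s a) (hpsum s a) (fun s' => ?_)
      exact stoch_sum_pos _ _ (fun a' => (hπ _).1 s' a') ((hπ _).2 s') (fun a' => ih s' a')
  have hexpabs : ∀ (s : Fin m) (a : Fin n), |γ * β ^ T * R s a| ≤ E := by
    intro s a
    rw [abs_mul, abs_mul, abs_pow, abs_of_pos hβ0]
    calc |γ| * β ^ T * |R s a| ≤ |γ| * β ^ T * C := by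
          apply mul_le_mul_of_nonneg_left (hR s a) (by positivity)
      _ = E := by rw [hE]; ring
  -- key sandwich between horizons T and T+1
  have key : ∀ (k : ℕ) (s : Fin m) (a : Fin n),
      Real.exp (-E) * Qrev β γ p π R T k s a ≤ Qrev β γ p π R (T+1) (k+1) s a ∧
      Qrev β γ p π R (T+1) (k+1) s a ≤ Real.exp E * Qrev β γ p π R T k s a := by
    intro k
    induction k with
    | zero =>
      intro s a
      have e1 : T + 1 - 1 - (0 + 1) = T - 1 := by omega
      have e2 : T + 1 - 1 - 0 = T := by omega
      have e3 : T + 1 - 1 = T := by omega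
      simp only [Qrev, e1, e2, e3]
      have hSlo : Real.exp (-E) ≤ ∑ s', p s a s' *
          ∑ a', π T s' a' * Real.exp (γ * β ^ T * R s' a') := by
        refine stoch_le_sum _ _ _ (hppos s a) (hpsum s a) (fun s' => ?_)
        refine stoch_le_sum _ _ _ (fun a' => (hπ T).1 s' a') ((hπ T).2 s') (fun a' => ?_)
        exact Real.exp_le_exp.2 ((abs_le.1 (hexpabs s' a')).1)
      have hShi : (∑ s', p s a s' *
          ∑ a', π T s' a' * Real.exp (γ * β ^ T * R s' a')) ≤ Real.exp E := by
        refine stoch_sum_le _ _ _ (hppos s a) (hpsum s a) (fun s' => ?_)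
        refine stoch_sum_le _ _ _ (fun a' => (hπ T).1 s' a') ((hπ T).2 s') (fun a' => ?_)
        exact Real.exp_le_exp.2 ((abs_le.1 (hexpabs s' a')).2)
      constructor
      · rw [mul_comm]
        exact mul_le_mul_of_nonneg_left hSlo (Real.exp_pos _).le
      · rw [mul_comm (Real.exp E)]
        exact mul_le_mul_of_nonneg_left hShi (Real.exp_pos _).le
    | succ k ih =>
      intro s a
      have e1 : T + 1 - 1 - (k + 1 + 1) = T - 1 - (k + 1) := by omega
      have e2 : T + 1 - 1 - (k + 1) = T - 1 - k := by omega
      rw [Qrev_succ β γ p π R (T+1) (k+1) s a, Qrev_succ β γ p π R T k s a, e1, e2]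
      have hin_lo : ∀ s' : Fin m,
          Real.exp (-E) * ∑ a', π (T - 1 - k) s' a' * Qrev β γ p π R T k s' a' ≤
          ∑ a', π (T - 1 - k) s' a' * Qrev β γ p π R (T+1) (k+1) s' a' := by
        intro s'
        rw [Finset.mul_sum]
        refine Finset.sum_le_sum (fun a' _ => ?_)
        rw [mul_left_comm]
        exact mul_le_mul_of_nonneg_left (ih s' a').1 ((hπ _).1 s' a')
      have hin_hi : ∀ s' : Fin m,
          (∑ a', π (T - 1 - k) s' a' * Qrev β γ p π R (T+1) (k+1) s' a') ≤
          Real.exp E * ∑ a', π (T - 1 - k) s' a' * Qrev β γ p π R T k s' a' := by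
        intro s'
        rw [Finset.mul_sum]
        refine Finset.sum_le_sum (fun a' _ => ?_)
        rw [mul_left_comm]
        exact mul_le_mul_of_nonneg_left (ih s' a').2 ((hπ _).1 s' a')
      have hout_lo : Real.exp (-E) * ∑ s', p s a s' *
          (∑ a', π (T - 1 - k) s' a' * Qrev β γ p π R T k s' a') ≤
          ∑ s', p s a s' * ∑ a', π (T - 1 - k) s' a' * Qrev β γ p π R (T+1) (k+1) s' a' := by
        rw [Finset.mul_sum]
        refine Finset.sum_le_sum (fun s' _ => ?_)
        rw [mul_left_comm]
        exact mul_le_mul_of_nonneg_left (hin_lo s') (hppos s a s')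
      have hout_hi : (∑ s', p s a s' *
          ∑ a', π (T - 1 - k) s' a' * Qrev β γ p π R (T+1) (k+1) s' a') ≤
          Real.exp E * ∑ s', p s a s' *
            (∑ a', π (T - 1 - k) s' a' * Qrev β γ p π R T k s' a') := by
        calc (∑ s', p s a s' *
            ∑ a', π (T - 1 - k) s' a' * Qrev β γ p π R (T+1) (k+1) s' a')
            ≤ ∑ s', p s a s' *
              (Real.exp E * ∑ a', π (T - 1 - k) s' a' * Qrev β γ p π R T k s' a') :=
              Finset.sum_le_sum (fun s' _ =>
                mul_le_mul_of_nonneg_left (hin_hi s') (hppos s a s'))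
          _ = _ := by rw [Finset.mul_sum]; exact Finset.sum_congr rfl (fun s' _ => by ring)
      constructor
      · calc Real.exp (-E) * (Real.exp (γ * β ^ (T - 1 - (k + 1)) * R s a) *
              ∑ s', p s a s' * ∑ a', π (T - 1 - k) s' a' * Qrev β γ p π R T k s' a')
            = Real.exp (γ * β ^ (T - 1 - (k + 1)) * R s a) *
              (Real.exp (-E) * ∑ s', p s a s' *
                ∑ a', π (T - 1 - k) s' a' * Qrev β γ p π R T k s' a') := by ring
          _ ≤ _ := by
              refine mul_le_mul_of_nonneg_left ?_ (Real.exp_pos _).le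
              simpa only [mul_assoc] using hout_lo
      · calc Real.exp (γ * β ^ (T - 1 - (k + 1)) * R s a) *
              ∑ s', p s a s' * ∑ a', π (T - 1 - k) s' a' * Qrev β γ p π R (T+1) (k+1) s' a'
            ≤ Real.exp (γ * β ^ (T - 1 - (k + 1)) * R s a) *
              (Real.exp E * ∑ s', p s a s' *
                ∑ a', π (T - 1 - k) s' a' * Qrev β γ p π R T k s' a') := by
              refine mul_le_mul_of_nonneg_left ?_ (Real.exp_pos _).le
              simpa only [mul_assoc] using hout_hi
          _ = _ := by ring
  -- rewrite JT in terms of Qrev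
  have h1 : JT β γ p π R T x = ∑ a, π 0 x a * Qrev β γ p π R T (T - 1) x a := by
    simp only [JT, Qmat, Nat.sub_zero]
  have h2 : JT β γ p π R (T+1) x = ∑ a, π 0 x a * Qrev β γ p π R (T+1) ((T-1)+1) x a := by
    have e : T + 1 - 1 - 0 = (T - 1) + 1 := by omega
    simp only [JT, Qmat, e]
  refine ⟨?_, ?_, ?_⟩
  · rw [h1]
    exact stoch_sum_pos _ _ (fun a => (hπ 0).1 x a) ((hπ 0).2 x) (fun a => Qpos T _ x a)
  · rw [h1, h2, Finset.mul_sum]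
    refine Finset.sum_le_sum (fun a _ => ?_)
    rw [mul_left_comm]
    exact mul_le_mul_of_nonneg_left (key (T-1) x a).1 ((hπ 0).1 x a)
  · rw [h1, h2, Finset.mul_sum]
    refine Finset.sum_le_sum (fun a _ => ?_)
    rw [mul_left_comm]
    exact mul_le_mul_of_nonneg_left (key (T-1) x a).2 ((hπ 0).1 x a)
end
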